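/- Let n ≥ 1 and let u, v : Fin (n+2) → ℝ be linearly independent. Then the 2-plane span{u,v} contains exactly one null direction — i.e. there exists a nonzero null vector w ∈ span{u,v}, and any two nonzero null vectors in span{u,v} are scalar multiples of each other — if and only if ⟨u,v⟩² = ⟨u,u⟩⟨v,v⟩ (equivalently, the bivector B = u∧v satisfies B·B = 0). -/

import Mathlib

open Finset

/-- The Minkowski signature factor: `ε 0 = 1`, `ε i = −1` for `i ≠ 0`. -/
noncomputable def eps {n : ℕ} (i : Fin (n + 2)) : ℝ := if i = 0 then 1 else -1

/-- The Minkowski bilinear form `⟨x,y⟩ = x 0 * y 0 − Σ_{a=1}^{n+1} x a * y a` on ℝ^{n+2}. -/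
noncomputable def mink {n : ℕ} (x y : Fin (n + 2) → ℝ) : ℝ :=
  ∑ i, eps i * x i * y i

/-!
In the coordinates `w = a • u + b • v` the Minkowski form on `span {u, v}` becomes the binary
quadratic form `A a² + 2 B a b + C b²` with `A = ⟨u,u⟩`, `B = ⟨u,v⟩`, `C = ⟨v,v⟩`. If
`B² < A C` it has no nonzero zero, if `B² > A C` it has two independent null lines, and if
`B² = A C` it is a nonzero multiple of the square of a linear form, whose kernel is the unique
null line. The form does not vanish identically, since a Minkowski plane is never totally null:
a null vector with vanishing time component is zero.
-/

open Module Set Function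

section NullLine

def HasUniqueNullLine (R : Type*) {V M : Type*} [Semiring R] [AddCommMonoid V] [Module R V]
    [Zero M] (q : V → M) (S : Set V) : Prop :=
  (∃ w ∈ S, w ≠ 0 ∧ q w = 0) ∧
    ∀ w₁ ∈ S, ∀ w₂ ∈ S, w₁ ≠ 0 → w₂ ≠ 0 → q w₁ = 0 → q w₂ = 0 → ∃ c : R, w₂ = c • w₁

variable {R K V W M : Type*} [Zero M]

theorem HasUniqueNullLine.congr [Semiring R] [AddCommMonoid V] [Module R V] {M' : Type*}
    [Zero M'] {q : V → M} {q' : V → M'} {S : Set V} (h : ∀ w ∈ S, q w = 0 ↔ q' w = 0) :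
    HasUniqueNullLine R q S ↔ HasUniqueNullLine R q' S := by
  unfold HasUniqueNullLine
  grind

theorem hasUniqueNullLine_image_iff [Semiring R] [AddCommMonoid V] [AddCommMonoid W]
    [Module R V] [Module R W] {f : W →ₗ[R] V} (hf : Injective f) (q : V → M) (S : Set W) :
    HasUniqueNullLine R q (f '' S) ↔ HasUniqueNullLine R (q ∘ f) S := by
  simp only [HasUniqueNullLine, forall_mem_image, exists_mem_image, ne_eq,
    map_eq_zero_iff f hf, comp_apply, ← map_smul, hf.eq_iff]

theorem Module.Dual.hasUniqueNullLine [Field K] [AddCommGroup V] [Module K V]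
    (hV : finrank K V = 2) {ℓ : Dual K V} (hℓ : ℓ ≠ 0) : HasUniqueNullLine K ℓ univ := by
  have : FiniteDimensional K V := Module.finite_of_finrank_eq_succ hV
  have hker : finrank K (LinearMap.ker ℓ) = 1 := by
    have := Dual.finrank_ker_add_one_of_ne_zero hℓ
    omega
  obtain ⟨⟨w, hw⟩, hw0, -⟩ := finrank_eq_one_iff'.mp hker
  refine ⟨⟨w, mem_univ w, by simpa using hw0, hw⟩, fun w₁ _ w₂ _ h₁ _ hw₁ hw₂ => ?_⟩
  obtain ⟨c, hc⟩ := (finrank_eq_one_iff_of_nonzero' (⟨w₁, hw₁⟩ : LinearMap.ker ℓ)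
    fun h => h₁ congr(Subtype.val $h)).mp hker ⟨w₂, hw₂⟩
  exact ⟨c, congr(Subtype.val $hc).symm⟩

end NullLine

section BinaryForm

def binaryForm (A B C : ℝ) (p : ℝ × ℝ) : ℝ := A * p.1 ^ 2 + 2 * B * p.1 * p.2 + C * p.2 ^ 2

variable {A B C : ℝ}

theorem mul_binaryForm (A B C : ℝ) (p : ℝ × ℝ) :
    A * binaryForm A B C p = (A * p.1 + B * p.2) ^ 2 + (A * C - B ^ 2) * p.2 ^ 2 := by
  unfold binaryForm; ring

theorem eq_zero_of_binaryForm_eq_zero (hdisc : B ^ 2 < A * C) {p : ℝ × ℝ}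
    (hp : binaryForm A B C p = 0) : p = 0 := by
  have hA : A ≠ 0 := by rintro rfl; nlinarith
  have hsum := mul_binaryForm A B C p
  rw [hp, mul_zero, eq_comm] at hsum
  have hpos : 0 < A * C - B ^ 2 := by linarith
  obtain ⟨h₁, h₂⟩ := (add_eq_zero_iff_of_nonneg (sq_nonneg _)
    (mul_nonneg hpos.le (sq_nonneg _))).mp hsum
  have hp₂ : p.2 = 0 :=
    pow_eq_zero_iff two_ne_zero |>.mp ((mul_eq_zero.mp h₂).resolve_left hpos.ne')
  rw [hp₂, mul_zero, add_zero, pow_eq_zero_iff two_ne_zero] at h₁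
  exact Prod.ext ((mul_eq_zero.mp h₁).resolve_left hA) hp₂

theorem exists_binaryForm_null_pair (hdisc : A * C < B ^ 2) :
    ∃ p q : ℝ × ℝ, binaryForm A B C p = 0 ∧ binaryForm A B C q = 0 ∧ p.1 * q.2 ≠ p.2 * q.1 := by
  by_cases hA : A = 0
  · have hB : B ≠ 0 := by rintro rfl; simp [hA] at hdisc
    refine ⟨(1, 0), (-C, 2 * B), by simp [binaryForm, hA], ?_, by simpa using hB⟩
    simp only [binaryForm, hA]
    ring
  · set s := √(B ^ 2 - A * C)
    have hs : s ^ 2 = B ^ 2 - A * C := Real.sq_sqrt (by linarith)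
    have hs0 : s ≠ 0 := (Real.sqrt_pos.mpr (by linarith)).ne'
    refine ⟨(-B + s, A), (-B - s, A), ?_, ?_, ?_⟩
    · simp only [binaryForm]; linear_combination A * hs
    · simp only [binaryForm]; linear_combination A * hs
    · intro h; apply mul_ne_zero hs0 hA; linarith

theorem exists_dual_binaryForm_eq_zero_iff_of_sq_eq (hdisc : B ^ 2 = A * C)
    (hne : ¬(A = 0 ∧ B = 0 ∧ C = 0)) :
    ∃ ℓ : Dual ℝ (ℝ × ℝ), ℓ ≠ 0 ∧ ∀ p, binaryForm A B C p = 0 ↔ ℓ p = 0 := by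
  by_cases hA : A = 0
  · have hB : B = 0 := by simpa [hA] using hdisc
    have hC : C ≠ 0 := fun hC => hne ⟨hA, hB, hC⟩
    refine ⟨LinearMap.snd ℝ ℝ ℝ, fun h => by simpa using congr($h (0, 1)), fun p => ?_⟩
    simp [binaryForm, hA, hB, hC]
  · refine ⟨A • LinearMap.fst ℝ ℝ ℝ + B • LinearMap.snd ℝ ℝ ℝ,
      fun h => hA (by simpa using congr($h (1, 0))), fun p => ?_⟩
    have h := mul_binaryForm A B C p
    rw [hdisc, sub_self, zero_mul, add_zero] at h
    rw [← mul_right_inj' hA, mul_zero, h, pow_eq_zero_iff two_ne_zero]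
    simp

theorem hasUniqueNullLine_binaryForm_iff (hne : ¬(A = 0 ∧ B = 0 ∧ C = 0)) :
    HasUniqueNullLine ℝ (binaryForm A B C) univ ↔ B ^ 2 = A * C := by
  constructor
  · rintro ⟨⟨p, -, hp0, hp⟩, huniq⟩
    rcases lt_trichotomy (B ^ 2) (A * C) with hlt | heq | hgt
    · exact absurd (eq_zero_of_binaryForm_eq_zero hlt hp) hp0
    · exact heq
    · obtain ⟨p, q, hp, hq, hpq⟩ := exists_binaryForm_null_pair hgt
      have hp0 : p ≠ 0 := by rintro rfl; simp at hpq
      have hq0 : q ≠ 0 := by rintro rfl; simp at hpq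
      obtain ⟨c, rfl⟩ := huniq p trivial q trivial hp0 hq0 hp hq
      simp only [Prod.smul_fst, Prod.smul_snd, smul_eq_mul] at hpq
      exact (hpq (by ring)).elim
  · intro hdisc
    obtain ⟨ℓ, hℓ, hnull⟩ := exists_dual_binaryForm_eq_zero_iff_of_sq_eq hdisc hne
    rw [HasUniqueNullLine.congr fun p _ => hnull p]
    exact Dual.hasUniqueNullLine (by simp) hℓ

end BinaryForm

section Minkowski

variable {n : ℕ}

theorem mink_smul_add_smul_self (u v : Fin (n + 2) → ℝ) (a b : ℝ) :
    mink (a • u + b • v) (a • u + b • v) = binaryForm (mink u u) (mink u v) (mink v v) (a, b) := by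
  simp only [binaryForm, mink, Pi.add_apply, Pi.smul_apply, smul_eq_mul, sum_mul, mul_sum,
    ← sum_add_distrib]
  exact sum_congr rfl fun i _ => by ring

theorem mink_self_eq (x : Fin (n + 2) → ℝ) :
    mink x x = x 0 ^ 2 - ∑ i : Fin (n + 1), x i.succ ^ 2 := by
  simp [mink, Fin.sum_univ_succ, eps, Fin.succ_ne_zero, sq, sub_eq_add_neg]

theorem eq_zero_of_mink_self_eq_zero {x : Fin (n + 2) → ℝ} (h₀ : x 0 = 0)
    (hx : mink x x = 0) : x = 0 := by
  have hsum : ∑ i : Fin (n + 1), x i.succ ^ 2 = 0 := by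
    have := mink_self_eq x
    rw [hx, h₀] at this
    linarith
  rw [sum_eq_zero_iff_of_nonneg fun i _ => sq_nonneg _] at hsum
  funext j
  cases j using Fin.cases with
  | zero => exact h₀
  | succ i => exact pow_eq_zero_iff two_ne_zero |>.mp (hsum i (mem_univ i))

theorem not_mink_totally_null {u v : Fin (n + 2) → ℝ} (huv : LinearIndependent ℝ ![u, v]) :
    ¬(mink u u = 0 ∧ mink u v = 0 ∧ mink v v = 0) := by
  rintro ⟨hA, hB, hC⟩
  have hnull : ∀ a b : ℝ, mink (a • u + b • v) (a • u + b • v) = 0 := fun a b => by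
    simp [mink_smul_add_smul_self, binaryForm, hA, hB, hC]
  have hw := eq_zero_of_mink_self_eq_zero (by simp; ring) (hnull (v 0) (-u 0))
  have hu₀ : u 0 = 0 := neg_eq_zero.mp (LinearIndependent.pair_iff.mp huv _ _ hw).2
  have hu : u = 0 := eq_zero_of_mink_self_eq_zero hu₀ hA
  simpa [hu] using LinearIndependent.pair_iff.mp huv 1 0

end Minkowski

theorem null_plane_iff (n : ℕ) (u v : Fin (n + 2) → ℝ)
    (huv : LinearIndependent ℝ ![u, v]) :
    ((∃ w ∈ Submodule.span ℝ {u, v}, w ≠ 0 ∧ mink w w = 0) ∧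
      ∀ w₁ ∈ Submodule.span ℝ {u, v}, ∀ w₂ ∈ Submodule.span ℝ {u, v},
        w₁ ≠ 0 → w₂ ≠ 0 → mink w₁ w₁ = 0 → mink w₂ w₂ = 0 → ∃ c : ℝ, w₂ = c • w₁) ↔
    (mink u v) ^ 2 = mink u u * mink v v := by
  set f := (LinearMap.toSpanSingleton ℝ _ u).coprod (LinearMap.toSpanSingleton ℝ _ v)
  have hf : Injective f := by
    rw [← LinearMap.ker_eq_bot, LinearMap.ker_eq_bot']
    intro p hp
    exact Prod.ext_iff.mpr (LinearIndependent.pair_iff.mp huv p.1 p.2 hp)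
  have hspan : (Submodule.span ℝ {u, v} : Set (Fin (n + 2) → ℝ)) = f '' univ := by
    ext w
    simp [f, Submodule.mem_span_pair]
  have hq : (fun w => mink w w) ∘ f = binaryForm (mink u u) (mink u v) (mink v v) :=
    funext fun p => mink_smul_add_smul_self u v p.1 p.2
  change HasUniqueNullLine ℝ (fun w => mink w w)
    (Submodule.span ℝ {u, v} : Set (Fin (n + 2) → ℝ)) ↔ _
  rw [hspan, hasUniqueNullLine_image_iff hf, hq]
  exact hasUniqueNullLine_binaryForm_iff (not_mink_totally_null huv)
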